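/- arXiv:1805.06315 — 2 statements merged into one kernel-verified Lean document; each statement's English description precedes it below -/
import Mathlib

section
/- If the dependency relation between blocks contains a directed cycle, then there is no feasible update sequence for the update flow network. -/
/-!
A formal model of congestion-free flow rerouting (network update scheduling).
An update flow network consists of a source `s`, a terminal `t`, edge
capacities, and `k` update flow pairs, each given by an old `s`-`t` path and
an update (new) `s`-`t` path (represented as lists of vertices) with a demand.
An update sequence assigns to every update `(v, i)` (vertex `v`, pair `i`) a
round; it is feasible if resolving all updates of earlier rounds together with
any subset of the current round always leaves, for every pair, a unique valid
(capacity-respecting) transient `s`-`t` path among the active edges, and the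
family of transient paths jointly respects the capacities.
-/

namespace FlowUpdate

variable {V : Type} [DecidableEq V] {k : ℕ}

/-- The edges of a path given as a list of vertices. -/
def edgesOf (p : List V) : List (V × V) := p.zip p.tail

/-- The subpath of `p` from vertex `a` to vertex `z` (inclusive). -/
def segment (p : List V) (a z : V) : List V :=
  ((p.dropWhile (fun v => decide (v ≠ a))).takeWhile (fun v => decide (v ≠ z))) ++ [z]

/-- The outgoing edge of `v` on the path `p`, if any. -/
def outEdge (p : List V) (v : V) : Option (V × V) :=
  (edgesOf p).find? (fun e => decide (e.1 = v))

/-- An update flow network with `k` update flow pairs. -/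
structure UFN (V : Type) (k : ℕ) where
  s : V
  t : V
  cap : V → V → ℕ
  old : Fin k → List V
  new : Fin k → List V
  demand : Fin k → ℕ

namespace UFN

/-- After resolving the set of updates `U`, edge `e` is active for pair `i` iff
it is an old edge whose tail is not yet updated, or a new edge whose tail is
updated. -/
def active (G : UFN V k) (U : Set (V × Fin k)) (i : Fin k) (e : V × V) : Prop :=
  (e ∈ edgesOf (G.old i) ∧ (e.1, i) ∉ U) ∨ (e ∈ edgesOf (G.new i) ∧ (e.1, i) ∈ U)

/-- `p` is a simple `s`-`t` path all of whose edges satisfy `E`. -/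
def IsPathIn (E : V × V → Prop) (s t : V) (p : List V) : Prop :=
  p.head? = some s ∧ p.getLast? = some t ∧ List.Chain' (fun u v => E (u, v)) p ∧ p.Nodup

/-- `p` respects the capacities for the demand of pair `i`. -/
def ValidPath (G : UFN V k) (i : Fin k) (p : List V) : Prop :=
  ∀ e ∈ edgesOf p, G.demand i ≤ G.cap e.1 e.2

/-- `T` is the unique valid transient path of pair `i` after resolving `U`. -/
def TransientPair (G : UFN V k) (U : Set (V × Fin k)) (i : Fin k) (T : List V) : Prop :=
  IsPathIn (G.active U i) G.s G.t T ∧ G.ValidPath i T ∧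
    ∀ p, IsPathIn (G.active U i) G.s G.t p → G.ValidPath i p → p = T

/-- After resolving `U`, every pair has a unique valid transient path, and the
family of transient paths jointly respects the capacities. -/
def TransientFamily (G : UFN V k) (U : Set (V × Fin k)) : Prop :=
  ∃ T : Fin k → List V,
    (∀ i, G.TransientPair U i (T i)) ∧
    (∀ u v : V, (∑ i : Fin k, if (u, v) ∈ edgesOf (T i) then G.demand i else 0) ≤ G.cap u v)

/-- An update sequence (an assignment of rounds to all updates) is feasible if
after resolving all updates of rounds `< r` together with any subset of the
updates of round `r`, all pairs admit a transient family. -/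
def Feasible (G : UFN V k) (R : V × Fin k → ℕ) : Prop :=
  ∀ r : ℕ, ∀ S : Set (V × Fin k), (∀ u ∈ S, R u = r) →
    G.TransientFamily ({u | R u < r} ∪ S)

/-- `p` is a simple path from the source to the terminal. -/
def IsStPath (G : UFN V k) (p : List V) : Prop :=
  p.head? = some G.s ∧ p.getLast? = some G.t ∧ p.Nodup

/-- Well-formedness of an update flow network: all old and new flows are simple
`s`-`t` paths, each pair forms a DAG, each new path respects capacities for its
own demand, and both the old family and the new family jointly respect the
capacities. -/
def WellFormed (G : UFN V k) : Prop :=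
  (∀ i, G.IsStPath (G.old i) ∧ G.IsStPath (G.new i)) ∧
  (∀ i, ∃ ord : V → ℕ, ∀ e ∈ edgesOf (G.old i) ++ edgesOf (G.new i), ord e.1 < ord e.2) ∧
  (∀ i, G.ValidPath i (G.new i)) ∧
  (∀ u v : V, (∑ i : Fin k, if (u, v) ∈ edgesOf (G.old i) then G.demand i else 0) ≤ G.cap u v) ∧
  (∀ u v : V, (∑ i : Fin k, if (u, v) ∈ edgesOf (G.new i) then G.demand i else 0) ≤ G.cap u v)

/-- The common vertices of the old and new path of pair `i`, in path order. -/
def commons (G : UFN V k) (i : Fin k) : List V :=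
  (G.old i).filter (fun v => decide (v ∈ G.new i))

/-- A block of pair `i` is a pair `(a, z)` of consecutive common vertices of the
old and new paths of `i`. -/
def IsBlock (G : UFN V k) (i : Fin k) (b : V × V) : Prop :=
  b ∈ edgesOf (G.commons i)

/-- A (candidate) block: a pair index together with its start and end vertices. -/
abbrev Blk (V : Type) (k : ℕ) := Fin k × V × V

def IsBlk (G : UFN V k) (b : Blk V k) : Prop := G.IsBlock b.1 b.2

/-- The old-path segment of a block. -/
def blkOldSeg (G : UFN V k) (b : Blk V k) : List V := segment (G.old b.1) b.2.1 b.2.2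

/-- The update-path segment of a block. -/
def blkNewSeg (G : UFN V k) (b : Blk V k) : List V := segment (G.new b.1) b.2.1 b.2.2

/-- Block `b1` depends on block `b2` (written `b1 → b2`) if they belong to
different pairs and some edge lies on `b1`'s update path and on `b2`'s old path
with capacity less than the sum of the two demands. -/
def Dep (G : UFN V k) (b1 b2 : Blk V k) : Prop :=
  G.IsBlk b1 ∧ G.IsBlk b2 ∧ b1.1 ≠ b2.1 ∧
  ∃ e : V × V, e ∈ edgesOf (G.blkNewSeg b1) ∧ e ∈ edgesOf (G.blkOldSeg b2) ∧
    G.cap e.1 e.2 < G.demand b1.1 + G.demand b2.1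

/-- The dependency graph contains a directed cycle. -/
def HasDepCycle (G : UFN V k) : Prop := ∃ b : Blk V k, Relation.TransGen G.Dep b b

/-- The number of rounds used by an update sequence. -/
def numRounds [Fintype V] (R : V × Fin k → ℕ) : ℕ :=
  (Finset.image R Finset.univ).card

/-- An update `(v, i)` is empty if `v`'s outgoing old edge and outgoing new edge
for pair `i` coincide (in particular if `v` has no outgoing edge for pair `i`). -/
def EmptyUpd (G : UFN V k) (u : V × Fin k) : Prop :=
  outEdge (G.old u.2) u.1 = outEdge (G.new u.2) u.1

instance (G : UFN V k) (u : V × Fin k) : Decidable (G.EmptyUpd u) :=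
  inferInstanceAs (Decidable (outEdge (G.old u.2) u.1 = outEdge (G.new u.2) u.1))

/-- `R` updates every block in (at most) 3 consecutive rounds: first all internal
update-path vertices of the block, then the start vertex, then all old-path-only
vertices of the block. -/
def BlockPattern (G : UFN V k) (R : V × Fin k → ℕ) : Prop :=
  ∀ b : Blk V k, G.IsBlk b → ∃ r : ℕ,
    (∀ v ∈ G.blkNewSeg b, v ≠ b.2.1 → v ≠ b.2.2 → R (v, b.1) = r) ∧
    R (b.2.1, b.1) = r + 1 ∧
    (∀ v ∈ G.blkOldSeg b, v ∉ G.new b.1 → R (v, b.1) = r + 2)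

/-- The size of the network (total length of the flow paths). -/
def size (G : UFN V k) : ℕ := ∑ i : Fin k, ((G.old i).length + (G.new i).length)

end UFN

end FlowUpdate

/-!
Suppose block `b₁` (of pair `i`) depends on block `b₂` (of pair `j ≠ i`) through an edge `e`.
Fix a topological order of each pair; no old or new edge of pair `i` jumps over a common vertex
of its two paths, so every transient path of `i` passes through all of them. Once the start
of `b₁` is updated, the interior vertices of `b₁`'s update segment lie off the old path and
hence have only their new out-edge, so the transient path of `i` follows the whole update
segment; symmetrically, while the start of `b₂` is not updated, the transient path of `j`
follows `b₂`'s old segment. Resolving the start of `b₁` in its round while that of `b₂` is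
pending would thus load `e` with `dᵢ + dⱼ > c(e)`. Hence along every dependency `b₁ → b₂` the
round of the start of `b₂` is strictly smaller than that of `b₁`, which is impossible around a
cycle.
-/

namespace FlowUpdate

section Edges

variable {α : Type}

@[simp]
lemma edgesOf_cons_cons (a b : α) (l : List α) :
    edgesOf (a :: b :: l) = (a, b) :: edgesOf (b :: l) := rfl

lemma mem_edgesOf_iff : ∀ {p : List α} {x y : α}, (x, y) ∈ edgesOf p ↔ [x, y] <:+: p
  | [], _, _ => by simp [edgesOf]
  | [_], _, _ => by
    simp only [edgesOf, List.tail_cons, List.zip_nil_right, List.not_mem_nil, false_iff]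
    exact fun h => by simpa using h.length_le
  | a :: b :: l, x, y => by
    rw [edgesOf_cons_cons, List.mem_cons, mem_edgesOf_iff, List.infix_cons_iff (l₂ := b :: l)]
    simp [List.cons_prefix_cons]

lemma _root_.List.IsInfix.edgesOf_subset {l₁ l₂ : List α} (h : l₁ <:+: l₂) :
    edgesOf l₁ ⊆ edgesOf l₂ :=
  fun _ he => mem_edgesOf_iff.2 ((mem_edgesOf_iff.1 he).trans h)

lemma exists_eq_append_of_mem_edgesOf {p : List α} {x y : α} (h : (x, y) ∈ edgesOf p) :
    ∃ s t, p = s ++ x :: y :: t := by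
  obtain ⟨s, t, rfl⟩ := mem_edgesOf_iff.1 h
  exact ⟨s, t, by simp⟩

lemma fst_mem_of_mem_edgesOf {p : List α} {x y : α} (h : (x, y) ∈ edgesOf p) : x ∈ p :=
  (mem_edgesOf_iff.1 h).subset (by simp)

lemma snd_mem_of_mem_edgesOf {p : List α} {x y : α} (h : (x, y) ∈ edgesOf p) : y ∈ p :=
  (mem_edgesOf_iff.1 h).subset (by simp)

lemma fst_mem_dropLast_of_mem_edgesOf {p : List α} {x y : α} (h : (x, y) ∈ edgesOf p) :
    x ∈ p.dropLast := by
  obtain ⟨s, t, rfl⟩ := mem_edgesOf_iff.1 h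
  simp [List.dropLast_append_of_ne_nil]

lemma isChain_of_forall_mem_edgesOf {R : α → α → Prop} {p : List α}
    (h : ∀ x y, (x, y) ∈ edgesOf p → R x y) : p.IsChain R :=
  List.isChain_iff_forall_rel_of_append_cons_cons.2 fun x y s t hp =>
    h x y (mem_edgesOf_iff.2 ⟨s, t, by simp [hp]⟩)

lemma _root_.List.Nodup.eq_of_mem_edgesOf : ∀ {p : List α}, p.Nodup → ∀ {x y₁ y₂ : α},
    (x, y₁) ∈ edgesOf p → (x, y₂) ∈ edgesOf p → y₁ = y₂
  | [], _, _, _, _, h, _ | [_], _, _, _, _, h, _ => by simp [edgesOf] at h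
  | a :: b :: l, hp, x, y₁, y₂, h₁, h₂ => by
    have ha : a ∉ b :: l := (List.nodup_cons.1 hp).1
    simp only [edgesOf_cons_cons, List.mem_cons, Prod.mk.injEq] at h₁ h₂
    rcases h₁ with ⟨rfl, rfl⟩ | h₁
    · rcases h₂ with ⟨-, rfl⟩ | h₂
      · rfl
      · exact absurd (fst_mem_of_mem_edgesOf h₂) ha
    · rcases h₂ with ⟨rfl, -⟩ | h₂
      · exact absurd (fst_mem_of_mem_edgesOf h₁) ha
      · exact (List.nodup_cons.1 hp).2.eq_of_mem_edgesOf h₁ h₂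

end Edges

section Sorted

variable {α : Type} {β : Type*} [Preorder β] (f : α → β) {p : List α}

lemma pairwise_of_forall_mem_edgesOf (h : ∀ x y, (x, y) ∈ edgesOf p → f x < f y) :
    p.Pairwise (f · < f ·) :=
  have : IsTrans α (f · < f ·) := ⟨fun _ _ _ => lt_trans⟩
  List.isChain_iff_pairwise.1 (isChain_of_forall_mem_edgesOf h)

variable {f}

lemma eq_or_lt_of_head?_eq_some (hp : p.Pairwise (f · < f ·)) {s x : α}
    (hs : p.head? = some s) (hx : x ∈ p) : s = x ∨ f s < f x := by
  obtain ⟨l, rfl⟩ := List.head?_eq_some_iff.1 hs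
  rcases List.mem_cons.1 hx with rfl | hx
  · exact .inl rfl
  · exact .inr ((List.pairwise_cons.1 hp).1 x hx)

lemma eq_or_lt_of_getLast?_eq_some (hp : p.Pairwise (f · < f ·)) {t x : α}
    (ht : p.getLast? = some t) (hx : x ∈ p) : x = t ∨ f x < f t := by
  obtain ⟨l, rfl⟩ := List.getLast?_eq_some_iff.1 ht
  rcases List.mem_append.1 hx with hx | hx
  · exact .inr ((List.pairwise_append.1 hp).2.2 x hx t (by simp))
  · exact .inl (List.mem_singleton.1 hx)

lemma lt_of_mem_edgesOf (hp : p.Pairwise (f · < f ·)) {a z : α} (he : (a, z) ∈ edgesOf p) :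
    f a < f z := by
  obtain ⟨s, t, rfl⟩ := exists_eq_append_of_mem_edgesOf he
  simp_all [List.pairwise_append]

lemma not_between_of_mem_edgesOf (hp : p.Pairwise (f · < f ·)) {a z c : α}
    (he : (a, z) ∈ edgesOf p) (hc : c ∈ p) : ¬ (f a < f c ∧ f c < f z) := by
  obtain ⟨s, t, rfl⟩ := exists_eq_append_of_mem_edgesOf he
  simp only [List.pairwise_append, List.pairwise_cons, List.mem_append, List.mem_cons] at hp hc
  rintro ⟨hac, hcz⟩
  rcases hc with hc | rfl | rfl | hc
  · exact lt_asymm hac (hp.2.2 c hc a (by simp))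
  · exact lt_irrefl _ hac
  · exact lt_irrefl _ hcz
  · exact lt_asymm hcz (hp.2.1.2.1 c hc)

lemma eq_or_lt_of_mem_edgesOf (hp : p.Pairwise (f · < f ·)) {a x y : α} (ha : a ∈ p)
    (he : (x, y) ∈ edgesOf p) (hx : f x < f a) : y = a ∨ f y < f a := by
  obtain ⟨s, t, rfl⟩ := exists_eq_append_of_mem_edgesOf he
  simp only [List.pairwise_append, List.pairwise_cons, List.mem_append, List.mem_cons] at hp ha
  rcases ha with ha | rfl | rfl | ha
  · exact absurd (hp.2.2 a ha x (by simp)) (lt_asymm hx)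
  · exact absurd hx (lt_irrefl _)
  · exact .inl rfl
  · exact .inr (hp.2.1.2.1 a ha)

lemma mem_of_isChain_of_no_skip {A : α → α → Prop} {a : α}
    (hA : ∀ x y, A x y → f x < f a → y = a ∨ f y < f a) {T : List α} (hT : T.IsChain A)
    {s t : α} (hs : T.head? = some s) (ht : T.getLast? = some t) (hsa : s = a ∨ f s < f a)
    (hta : ¬ f t < f a) : a ∈ T := by
  by_contra haT
  have hbelow : ∀ x ∈ T, f x < f a := by
    refine (hT.imp_of_mem_imp (S := fun x y => A x y ∧ y ≠ a) ?_).induction _ _ ?_ ?_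
    · exact fun x y _ hy hxy => ⟨hxy, fun h => haT (h ▸ hy)⟩
    · exact fun x y ⟨hxy, hy⟩ hx => (hA x y hxy hx).resolve_left hy
    · intro hne
      rw [(List.head_eq_iff_head?_eq_some hne).2 hs]
      exact hsa.resolve_left fun h => haT (h ▸ List.mem_of_head? hs)
  exact hta (hbelow t (List.mem_of_getLast? ht))

lemma exists_segment_eq [DecidableEq α] (hp : p.Pairwise (f · < f ·)) {a z : α} (ha : a ∈ p)
    (hz : z ∈ p) (haz : f a < f z) :
    ∃ n, segment p a z = a :: (n ++ [z]) ∧ a :: (n ++ [z]) <:+: p ∧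
      ∀ v ∈ n, f a < f v ∧ f v < f z := by
  obtain ⟨m, l, rfl⟩ := List.append_of_mem ha
  simp only [List.pairwise_append, List.pairwise_cons] at hp
  have hzl : z ∈ l := by
    rcases List.mem_append.1 hz with hz | hz
    · exact absurd (hp.2.2 z hz a (by simp)) (lt_asymm haz)
    · exact (List.mem_cons.1 hz).resolve_left (fun h => lt_irrefl (f a) (h ▸ haz))
  obtain ⟨n, r, rfl⟩ := List.append_of_mem hzl
  have hn : ∀ v ∈ n, f a < f v ∧ f v < f z := fun v hv =>
    ⟨hp.2.1.1 v (by simp [hv]), (List.pairwise_append.1 hp.2.1.2).2.2 v hv z (by simp)⟩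
  refine ⟨n, ?_, ⟨m, r, by simp⟩, hn⟩
  have hm : ∀ v ∈ m, v ≠ a := fun v hv h => lt_irrefl (f a) (h ▸ hp.2.2 v hv a (by simp))
  have hnz : ∀ v ∈ n, v ≠ z := fun v hv h => lt_irrefl (f z) (h ▸ (hn v hv).2)
  have haz' : a ≠ z := fun h => lt_irrefl (f a) (h ▸ haz)
  rw [segment, List.dropWhile_append_of_pos (by simpa using hm),
    List.dropWhile_cons_of_neg (by simp), ← List.cons_append,
    List.takeWhile_append_of_pos (by simpa [haz'] using hnz),
    List.takeWhile_cons_of_neg (by simp)]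
  simp

end Sorted

section Forced

variable {α : Type} {A : α → α → Prop} {t : α}

lemma prefix_of_forced : ∀ {q T : List α}, T.IsChain A → q.head? = T.head? →
    T.getLast? = some t → (∀ x y, (x, y) ∈ edgesOf q → x ≠ t ∧ ∀ w, A x w → w = y) → q <+: T
  | [], _, _, _, _, _ => List.nil_prefix
  | [_], [], _, hh, _, _ => by simp at hh
  | [u], _ :: T, _, hh, _, _ => by
    obtain rfl : u = _ := by simpa using hh
    exact List.cons_prefix_cons.2 ⟨rfl, List.nil_prefix⟩
  | _ :: _ :: _, [], _, hh, _, _ => by simp at hh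
  | u :: w :: q, [x], _, hh, ht, hf => by
    obtain rfl : u = x := by simpa using hh
    exact absurd (by simpa using ht) (hf u w (by simp)).1
  | u :: w :: q, x :: y :: T, hT, hh, ht, hf => by
    obtain rfl : u = x := by simpa using hh
    rw [List.isChain_cons_cons] at hT
    obtain rfl : y = w := (hf u w (by simp)).2 y hT.1
    refine List.cons_prefix_cons.2 ⟨rfl, prefix_of_forced hT.2 rfl (by simpa using ht) ?_⟩
    exact fun x' y' he => hf x' y' (by simp [he])

lemma edgesOf_subset_of_forced {a : α} {q T : List α} (hT : T.IsChain A) (ha : a ∈ T)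
    (ht : T.getLast? = some t)
    (hf : ∀ x y, (x, y) ∈ edgesOf (a :: q) → x ≠ t ∧ ∀ w, A x w → w = y) :
    edgesOf (a :: q) ⊆ edgesOf T := by
  obtain ⟨T₁, T₂, rfl⟩ := List.append_of_mem ha
  have hsuf : a :: T₂ <:+ T₁ ++ a :: T₂ := List.suffix_append _ _
  have hpre := prefix_of_forced (q := a :: q) (hT.suffix hsuf) rfl
    (by simpa [List.getLast?_append_cons] using ht) hf
  exact (hpre.isInfix.trans hsuf.isInfix).edgesOf_subset

variable {β : Type*} [Preorder β] {f : α → β}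

lemma edgesOf_segment_subset [DecidableEq α] {P Q T : List α} {a z : α}
    (hP : P.Pairwise (f · < f ·)) (hPt : P.getLast? = some t) (ha : a ∈ P) (hz : z ∈ P)
    (haz : f a < f z) (hgap : ∀ v ∈ P, v ∈ Q → ¬ (f a < f v ∧ f v < f z))
    (hA : ∀ u w, (u = a ∨ u ∉ Q) → A u w → (u, w) ∈ edgesOf P)
    (hT : T.IsChain A) (haT : a ∈ T) (hTt : T.getLast? = some t) :
    edgesOf (segment P a z) ⊆ edgesOf T := by
  obtain ⟨n, hseg, hinf, hn⟩ := exists_segment_eq hP ha hz haz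
  rw [hseg]
  refine edgesOf_subset_of_forced hT haT hTt fun x y he => ?_
  have hx : x = a ∨ x ∈ n := by
    have := fst_mem_dropLast_of_mem_edgesOf he
    rwa [← List.cons_append, List.dropLast_concat, List.mem_cons] at this
  have hxz : f x < f z := hx.elim (· ▸ haz) (hn x · |>.2)
  refine ⟨fun hxt => ?_, fun w hw => ?_⟩
  · subst hxt
    rcases eq_or_lt_of_getLast?_eq_some hP hPt hz with rfl | hzx
    · exact lt_irrefl _ hxz
    · exact lt_asymm hxz hzx
  · have hxQ : x = a ∨ x ∉ Q := hx.imp_right fun hxn hxQ =>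
      hgap x (hinf.subset (by simp [hxn])) hxQ (hn x hxn)
    have hPnd : P.Nodup := hP.imp fun h => ne_of_apply_ne f h.ne
    exact hPnd.eq_of_mem_edgesOf (hA x w hxQ hw) (hinf.edgesOf_subset he)

end Forced

def startUpd {V : Type} {k : ℕ} (b : UFN.Blk V k) : V × Fin k := (b.2.1, b.1)

namespace UFN

variable {V : Type} [DecidableEq V] {k : ℕ} {G : UFN V k}

lemma WellFormed.exists_rank (hWF : G.WellFormed) (i : Fin k) :
    ∃ f : V → ℕ, (G.old i).Pairwise (f · < f ·) ∧ (G.new i).Pairwise (f · < f ·) := by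
  obtain ⟨f, hf⟩ := hWF.2.1 i
  exact ⟨f, pairwise_of_forall_mem_edgesOf f fun x y h => hf (x, y) (List.mem_append_left _ h),
    pairwise_of_forall_mem_edgesOf f fun x y h => hf (x, y) (List.mem_append_right _ h)⟩

lemma mem_commons {i : Fin k} {v : V} : v ∈ G.commons i ↔ v ∈ G.old i ∧ v ∈ G.new i := by
  simp [commons]

lemma IsBlk.mem {b : Blk V k} (hb : G.IsBlk b) :
    (b.2.1 ∈ G.old b.1 ∧ b.2.1 ∈ G.new b.1) ∧ (b.2.2 ∈ G.old b.1 ∧ b.2.2 ∈ G.new b.1) :=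
  ⟨mem_commons.1 (fst_mem_of_mem_edgesOf hb), mem_commons.1 (snd_mem_of_mem_edgesOf hb)⟩

lemma WellFormed.mem_of_isPathIn (hWF : G.WellFormed) {U : Set (V × Fin k)} {i : Fin k}
    {a : V} {T : List V} (hao : a ∈ G.old i) (han : a ∈ G.new i)
    (hT : IsPathIn (G.active U i) G.s G.t T) : a ∈ T := by
  obtain ⟨f, hold, hnew⟩ := hWF.exists_rank i
  obtain ⟨⟨hs, ht, -⟩, -⟩ := hWF.1 i
  obtain ⟨hTs, hTt, hT, -⟩ := hT
  refine mem_of_isChain_of_no_skip (f := f) (fun x y hxy hx => ?_) hT hTs hTt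
    (eq_or_lt_of_head?_eq_some hold hs hao) ?_
  · rcases hxy with ⟨he, -⟩ | ⟨he, -⟩
    · exact eq_or_lt_of_mem_edgesOf hold hao he hx
    · exact eq_or_lt_of_mem_edgesOf hnew han he hx
  · rcases eq_or_lt_of_getLast?_eq_some hold ht hao with rfl | h
    · exact lt_irrefl _
    · exact lt_asymm h

lemma WellFormed.edgesOf_blkNewSeg_subset (hWF : G.WellFormed) {U : Set (V × Fin k)}
    {b : Blk V k} (hb : G.IsBlk b) (hU : startUpd b ∈ U) {T : List V}
    (hT : IsPathIn (G.active U b.1) G.s G.t T) : edgesOf (G.blkNewSeg b) ⊆ edgesOf T := by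
  obtain ⟨i, a, z⟩ := b
  obtain ⟨f, hold, hnew⟩ := hWF.exists_rank i
  have hcom : (G.commons i).Pairwise (f · < f ·) := hold.sublist List.filter_sublist
  obtain ⟨⟨hao, han⟩, -, hzn⟩ := hb.mem
  refine edgesOf_segment_subset hnew (hWF.1 i).2.2.1 han hzn (lt_of_mem_edgesOf hcom hb)
    (fun v hvn hvo => not_between_of_mem_edgesOf hcom hb (mem_commons.2 ⟨hvo, hvn⟩)) ?_
    hT.2.2.1 (hWF.mem_of_isPathIn hao han hT) hT.2.1
  rintro u w hu (⟨he, hnU⟩ | ⟨he, -⟩)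
  · rcases hu with rfl | hu
    · exact absurd hU hnU
    · exact absurd (fst_mem_of_mem_edgesOf he) hu
  · exact he

lemma WellFormed.edgesOf_blkOldSeg_subset (hWF : G.WellFormed) {U : Set (V × Fin k)}
    {b : Blk V k} (hb : G.IsBlk b) (hU : startUpd b ∉ U) {T : List V}
    (hT : IsPathIn (G.active U b.1) G.s G.t T) : edgesOf (G.blkOldSeg b) ⊆ edgesOf T := by
  obtain ⟨i, a, z⟩ := b
  obtain ⟨f, hold, -⟩ := hWF.exists_rank i
  have hcom : (G.commons i).Pairwise (f · < f ·) := hold.sublist List.filter_sublist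
  obtain ⟨⟨hao, han⟩, hzo, -⟩ := hb.mem
  refine edgesOf_segment_subset hold (hWF.1 i).1.2.1 hao hzo (lt_of_mem_edgesOf hcom hb)
    (fun v hvo hvn => not_between_of_mem_edgesOf hcom hb (mem_commons.2 ⟨hvo, hvn⟩)) ?_
    hT.2.2.1 (hWF.mem_of_isPathIn hao han hT) hT.2.1
  rintro u w hu (⟨he, -⟩ | ⟨he, hnU⟩)
  · exact he
  · rcases hu with rfl | hu
    · exact absurd hnU hU
    · exact absurd (fst_mem_of_mem_edgesOf he) hu

lemma Feasible.lt_of_dep (hWF : G.WellFormed) {R : V × Fin k → ℕ} (hR : G.Feasible R)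
    {b₁ b₂ : Blk V k} (hd : G.Dep b₁ b₂) : R (startUpd b₂) < R (startUpd b₁) := by
  obtain ⟨hb₁, hb₂, hne, ⟨x, y⟩, he₁, he₂, hcap⟩ := hd
  by_contra! hle
  obtain ⟨T, hT, hsum⟩ := hR (R (startUpd b₁)) {startUpd b₁} (by simp)
  have h₁ : (x, y) ∈ edgesOf (T b₁.1) :=
    hWF.edgesOf_blkNewSeg_subset hb₁ (by simp) (hT b₁.1).1 he₁
  have h₂ : (x, y) ∈ edgesOf (T b₂.1) :=
    hWF.edgesOf_blkOldSeg_subset hb₂ (by simpa [startUpd, Ne.symm hne] using hle)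
      (hT b₂.1).1 he₂
  have hload := Finset.add_le_sum
    (f := fun i => if (x, y) ∈ edgesOf (T i) then G.demand i else 0) (fun _ _ => Nat.zero_le _)
    (Finset.mem_univ b₁.1) (Finset.mem_univ b₂.1) hne
  simp only [h₁, h₂, if_true] at hload
  exact absurd (hload.trans (hsum x y)) (not_le.2 hcap)

end UFN

end FlowUpdate

open FlowUpdate in
/-- If the dependency relation between blocks contains a directed
cycle, then there is no feasible update sequence for the update flow network. -/
theorem stmt0 {V : Type} [DecidableEq V] {k : ℕ} (G : UFN V k)
    (hWF : G.WellFormed) (hcyc : G.HasDepCycle) :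
    ¬ ∃ R : V × Fin k → ℕ, G.Feasible R := by
  rintro ⟨R, hR⟩
  obtain ⟨b, hcycle⟩ := hcyc
  have hlt : Relation.TransGen (· > ·) (R (startUpd b)) (R (startUpd b)) :=
    Relation.TransGen.lift (r := G.Dep) (p := (· > ·)) (fun b => R (startUpd b))
      (fun _ _ => hR.lt_of_dep hWF) b b hcycle
  rw [Relation.transGen_eq_self] at hlt
  exact lt_irrefl _ hlt
end

section
/- If there exists any feasible update sequence for an update flow network, then there exists a feasible update sequence in which every block is updated in at most 3 consecutive rounds: first all update-path vertices of the block except its start, then the start vertex, then all remaining (old-path-only) vertices of the block. -/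
/-!
The transient path of a pair passes through every vertex common to its old and new path (by the
DAG condition these occur in the same order on both), and between consecutive common vertices
`a`, `z` it follows the new segment if `a` is updated and the old one otherwise. Call an update
set consistent if, in every block, the new interior is updated once the start is and the old
interior is not updated while the start is not; a set with transient paths is consistent. Walking
back along a transient path to the last common vertex shows: if two consistent sets update the
same common vertices, they have the same transient paths.

Given a feasible `R`, put the new interior of the block starting at `a` into round `3 R a + 1`,
`a` itself into `3 R a + 2` and the old interior into `3 R a + 3`. Every intermediate state of
this schedule (rounds `< r` and part of round `r`) is consistent and updates the same common
vertices as the state of `R` given by the rounds `< r / 3` and part of round `r / 3`.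
-/

namespace FlowUpdate

section Lists

variable {V : Type}

theorem mem_edgesOf_iff_infix {x y : V} {l : List V} : (x, y) ∈ edgesOf l ↔ [x, y] <:+: l := by
  induction l with
  | nil => simp [edgesOf]
  | cons a l ih =>
    cases l with
    | nil => exact ⟨fun h => by simp [edgesOf] at h, fun h => by simpa using h.length_le⟩
    | cons b l =>
      rw [show edgesOf (a :: b :: l) = (a, b) :: edgesOf (b :: l) from rfl, List.mem_cons, ih,
        List.infix_cons_iff (l₂ := b :: l)]
      simp [List.cons_prefix_cons]

theorem mem_edgesOf_iff_s2 {x y : V} {l : List V} :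
    (x, y) ∈ edgesOf l ↔ ∃ l₁ l₂, l = l₁ ++ x :: y :: l₂ := by
  simp only [mem_edgesOf_iff_infix, List.IsInfix, List.append_assoc, List.cons_append,
    List.nil_append, eq_comm]

theorem isChain_iff_forall_mem_edgesOf {R : V → V → Prop} {l : List V} :
    l.IsChain R ↔ ∀ x y, (x, y) ∈ edgesOf l → R x y := by
  simp only [List.isChain_iff_forall_rel_of_append_cons_cons, mem_edgesOf_iff_s2]
  grind

theorem exists_mem_edgesOf_of_ne_getLast {l : List V} {t v : V} (hl : l.getLast? = some t)
    (hv : v ∈ l) (hvt : v ≠ t) : ∃ w, (v, w) ∈ edgesOf l := by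
  obtain ⟨l₁, _ | ⟨w, l₂⟩, rfl⟩ := List.append_of_mem hv
  · simp_all
  · exact ⟨w, mem_edgesOf_iff_s2.2 ⟨l₁, l₂, rfl⟩⟩

theorem exists_mem_edgesOf_of_ne_head {l : List V} {s v : V} (hl : l.head? = some s)
    (hv : v ∈ l) (hvs : v ≠ s) : ∃ w, (w, v) ∈ edgesOf l := by
  obtain ⟨l₁, l₂, rfl⟩ := List.append_of_mem hv
  rcases List.eq_nil_or_concat l₁ with rfl | ⟨l₁, w, rfl⟩
  · simp_all
  · exact ⟨w, mem_edgesOf_iff_s2.2 ⟨l₁, l₂, by simp⟩⟩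

theorem nodup_append_cons_inj {x : V} {A B A' B' : List V} (hl : (A ++ x :: B).Nodup)
    (h : A ++ x :: B = A' ++ x :: B') : A = A' ∧ B = B' := by
  classical
  have hA : x ∉ A := fun hx => (List.nodup_append.1 hl).2.2 x hx x (by simp) rfl
  have hA' : x ∉ A' := fun hx => (List.nodup_append.1 (h ▸ hl)).2.2 x hx x (by simp) rfl
  have hlen : A.length = A'.length := by
    simpa [List.idxOf_append_of_notMem hA, List.idxOf_append_of_notMem hA'] using
      congrArg (List.idxOf x) h
  obtain ⟨h₁, h₂⟩ := List.append_inj h hlen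
  exact ⟨h₁, (List.cons.inj h₂).2⟩

theorem snd_eq_of_mem_edgesOf_of_nodup {x y y' : V} {l : List V} (hl : l.Nodup)
    (h : (x, y) ∈ edgesOf l) (h' : (x, y') ∈ edgesOf l) : y = y' := by
  obtain ⟨A, B, rfl⟩ := mem_edgesOf_iff_s2.1 h
  obtain ⟨A', B', h'⟩ := mem_edgesOf_iff_s2.1 h'
  exact (List.cons.inj (nodup_append_cons_inj hl h').2).1

theorem fst_eq_of_mem_edgesOf_of_nodup {x x' y : V} {l : List V} (hl : l.Nodup)
    (h : (x, y) ∈ edgesOf l) (h' : (x', y) ∈ edgesOf l) : x = x' := by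
  obtain ⟨A, B, rfl⟩ := mem_edgesOf_iff_s2.1 h
  obtain ⟨A', B', h'⟩ := mem_edgesOf_iff_s2.1 h'
  have := (nodup_append_cons_inj (A := A ++ [x]) (A' := A' ++ [x']) (by simpa using hl)
    (by simpa using h')).1
  simpa using congrArg List.getLast? this

theorem fst_ne_of_mem_edgesOf_of_getLast {x y t : V} {l : List V} (hl : l.Nodup)
    (ht : l.getLast? = some t) (h : (x, y) ∈ edgesOf l) : x ≠ t := by
  rintro rfl
  obtain ⟨A, B, rfl⟩ := mem_edgesOf_iff_s2.1 h
  have : x ∈ y :: B := List.mem_of_getLast? (by simpa [List.getLast?_cons] using ht)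
  simp_all [List.nodup_append]

theorem snd_ne_of_mem_edgesOf_of_head {x y s : V} {l : List V} (hl : l.Nodup)
    (hs : l.head? = some s) (h : (x, y) ∈ edgesOf l) : y ≠ s := by
  rintro rfl
  obtain ⟨_ | ⟨c, A⟩, B, rfl⟩ := mem_edgesOf_iff_s2.1 h <;> simp_all

/-- The `P`-side of the block `(a, z)` of the pair of paths `P`, `Q`. -/
def Detour (P Q : List V) (a : V) (m : List V) (z : V) : Prop :=
  a :: m ++ [z] <:+: P ∧ a ∈ Q ∧ z ∈ Q ∧ ∀ x ∈ m, x ∉ Q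

theorem mem_of_mem_edgesOf_of_infix {P m : List V} {a z w : V} (hP : P.Nodup)
    (h : a :: m ++ [z] <:+: P) (hw : (w, z) ∈ edgesOf P) : w ∈ a :: m := by
  obtain ⟨L, u, hL⟩ := (List.eq_nil_or_concat (a :: m)).resolve_left (List.cons_ne_nil _ _)
  rw [List.concat_eq_append] at hL
  have huz : (u, z) ∈ edgesOf P :=
    mem_edgesOf_iff_infix.2 (List.IsInfix.trans ⟨L, [], by simp⟩ (hL ▸ h))
  rw [fst_eq_of_mem_edgesOf_of_nodup hP hw huz, hL]
  simp

theorem exists_detour_of_mem_edgesOf_filter [DecidableEq V] {P Q : List V} {a z : V}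
    (h : (a, z) ∈ edgesOf (P.filter (· ∈ Q))) : ∃ m, Detour P Q a m z := by
  obtain ⟨C₁, C₂, hC⟩ := mem_edgesOf_iff_s2.1 h
  obtain ⟨l₁, l₂, rfl, -, h₂⟩ := List.filter_eq_append_iff.1 hC
  obtain ⟨n, l₃, rfl, -, ha, h₃⟩ := List.filter_eq_cons_iff.1 h₂
  obtain ⟨m, l₄, rfl, hm, hz, -⟩ := List.filter_eq_cons_iff.1 h₃
  exact ⟨m, ⟨l₁ ++ n, l₄, by simp⟩, by simpa using ha, by simpa using hz,
    by simpa using hm⟩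

theorem exists_detour_of_mem [DecidableEq V] {P Q : List V} {s t u : V} (hs : P.head? = some s)
    (ht : P.getLast? = some t) (hsQ : s ∈ Q) (htQ : t ∈ Q) (hu : u ∈ P) (huQ : u ∉ Q) :
    ∃ a m z, Detour P Q a m z ∧ u ∈ m := by
  obtain ⟨A, B, rfl⟩ := List.append_of_mem hu
  have hA : A.filter (· ∈ Q) ≠ [] := by
    rcases A with _ | ⟨c, A⟩ <;> simp_all
  have hB : B.filter (· ∈ Q) ≠ [] := by
    rcases List.eq_nil_or_concat B with rfl | ⟨B, c, rfl⟩
    · simp_all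
    · rw [List.concat_eq_append, ← List.cons_append, ← List.append_assoc,
        List.getLast?_concat] at ht
      simp_all
  obtain ⟨C, a, hC⟩ := (List.eq_nil_or_concat _).resolve_left hA
  rw [List.concat_eq_append] at hC
  obtain ⟨A₁, A₂, rfl, -, hA₂⟩ := List.filter_eq_append_iff.1 hC
  obtain ⟨n, m₁, rfl, -, ha, hm₁⟩ := List.filter_eq_cons_iff.1 hA₂
  obtain ⟨z, C', hC'⟩ := List.exists_cons_of_ne_nil hB
  obtain ⟨m₂, B', rfl, hm₂, hz, -⟩ := List.filter_eq_cons_iff.1 hC'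
  refine ⟨a, m₁ ++ u :: m₂, z,
    ⟨⟨A₁ ++ n, B', by simp⟩, by simpa using ha, by simpa using hz, ?_⟩, by simp⟩
  simp only [List.filter_eq_nil_iff, decide_eq_true_eq] at hm₁
  simp only [decide_eq_true_eq] at hm₂
  grind

theorem segment_eq_of_infix [DecidableEq V] {P m : List V} {a z : V} (hP : P.Nodup)
    (h : a :: m ++ [z] <:+: P) : segment P a z = a :: m ++ [z] := by
  obtain ⟨A, B, rfl⟩ := h
  replace hP : (A ++ a :: (m ++ z :: B)).Nodup := by simpa using hP
  have haA : ∀ x ∈ A, x ≠ a := fun x hx => (List.nodup_append.1 hP).2.2 x hx a (by simp)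
  obtain ⟨haz, hzm⟩ : a ≠ z ∧ z ∉ m := by
    have := (List.nodup_append.1 hP).2.1
    simp only [List.nodup_cons, List.nodup_append, List.mem_append, List.mem_cons] at this
    exact ⟨fun h => this.1 (Or.inr (Or.inl h)), fun h => this.2.2.2 z h z (by simp) rfl⟩
  have hz : ∀ x ∈ a :: m, x ≠ z := by
    rintro x (_ | ⟨_, hx⟩)
    · exact haz
    · exact fun h => hzm (h ▸ hx)
  simp only [segment, List.append_assoc, List.cons_append, List.nil_append]
  rw [List.dropWhile_append_of_pos (by simpa using haA), List.dropWhile_cons_of_neg (by simp),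
    ← List.cons_append, List.takeWhile_append_of_pos (by simpa using hz),
    List.takeWhile_cons_of_neg (by simp)]
  simp

def detourStart [DecidableEq V] (P Q : List V) (v : V) : V :=
  ((P.takeWhile (· ≠ v)).filter (· ∈ Q)).getLastD v

theorem detourStart_eq [DecidableEq V] {P Q m : List V} {a v : V} (hP : P.Nodup)
    (h : a :: m <:+: P) (ha : a ∈ Q) (hm : ∀ x ∈ m, x ∉ Q) (hv : v ∈ m) :
    detourStart P Q v = a := by
  obtain ⟨A, B, rfl⟩ := h
  obtain ⟨m₁, m₂, rfl⟩ := List.append_of_mem hv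
  replace hP : ((A ++ a :: m₁) ++ v :: (m₂ ++ B)).Nodup := by simpa using hP
  have hvA : ∀ x ∈ A ++ a :: m₁, x ≠ v := fun x hx =>
    (List.nodup_append.1 hP).2.2 x hx v (by simp)
  have hm₁ : ∀ x ∈ m₁, x ∉ Q := fun x hx => hm x (by simp [hx])
  simp only [detourStart, List.append_assoc, List.cons_append] at hP ⊢
  rw [← List.cons_append, ← List.append_assoc,
    List.takeWhile_append_of_pos (by simpa using hvA), List.takeWhile_cons_of_neg (by simp)]
  have : m₁.filter (· ∈ Q) = [] := List.filter_eq_nil_iff.2 (by simpa using hm₁)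
  simp [List.filter_append, ha, this]

end Lists

section Switching

variable {V : Type} {P Q p m : List V} {X : V → Prop} {s t a z u v w : V}

/-- Abstracts `UFN.active`: exchanging the paths and negating `X` (`switchEdge_swap`) turns every
lemma about the `P`-side of a block into one about its `Q`-side. -/
def switchEdge (P Q : List V) (X : V → Prop) (e : V × V) : Prop :=
  (e ∈ edgesOf P ∧ ¬X e.1) ∨ (e ∈ edgesOf Q ∧ X e.1)

theorem switchEdge_swap : switchEdge Q P (fun v => ¬X v) = switchEdge P Q X := by
  funext e
  simp only [switchEdge, not_not, eq_iff_iff]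
  tauto

def SwitchConsistent (P Q : List V) (X : V → Prop) : Prop :=
  (∀ a m z, Detour P Q a m z → ¬X a → ∀ v ∈ m, ¬X v) ∧
    (∀ a m z, Detour Q P a m z → X a → ∀ v ∈ m, X v)

namespace UFN.IsPathIn

variable (hp : UFN.IsPathIn (switchEdge P Q X) s t p)
include hp

theorem swap : UFN.IsPathIn (switchEdge Q P (fun v => ¬X v)) s t p := by
  rwa [switchEdge_swap]

theorem switchEdge_of_mem_edgesOf (h : (u, v) ∈ edgesOf p) : switchEdge P Q X (u, v) :=
  isChain_iff_forall_mem_edgesOf.1 hp.2.2.1 u v h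

theorem not_switched_of_not_mem (hv : v ∈ p) (hvt : v ≠ t) (hvQ : v ∉ Q) : ¬X v := by
  obtain ⟨w, hvw⟩ := exists_mem_edgesOf_of_ne_getLast hp.2.1 hv hvt
  rcases hp.switchEdge_of_mem_edgesOf hvw with ⟨-, hX⟩ | ⟨hQ, -⟩
  · exact hX
  · exact absurd (mem_edgesOf_iff_infix.1 hQ).subset (by simp [hvQ])

theorem mem_of_not_switched (hP : P.Nodup) (hv : v ∈ p) (hvt : v ≠ t) (hX : ¬X v)
    (hvw : (v, w) ∈ edgesOf P) : w ∈ p := by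
  obtain ⟨w', hvw'⟩ := exists_mem_edgesOf_of_ne_getLast hp.2.1 hv hvt
  rcases hp.switchEdge_of_mem_edgesOf hvw' with ⟨hP', -⟩ | ⟨-, hX'⟩
  · rw [snd_eq_of_mem_edgesOf_of_nodup hP hvw hP']
    exact (mem_edgesOf_iff_infix.1 hvw').subset (by simp)
  · exact absurd hX' hX

theorem mem_not_switched_of_pred (hP : P.Nodup) (hv : v ∈ p) (hvs : v ≠ s) (hvQ : v ∉ Q)
    (huv : (u, v) ∈ edgesOf P) : u ∈ p ∧ ¬X u := by
  obtain ⟨w, hwv⟩ := exists_mem_edgesOf_of_ne_head hp.1 hv hvs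
  rcases hp.switchEdge_of_mem_edgesOf hwv with ⟨hP', hX⟩ | ⟨hQ, -⟩
  · rw [fst_eq_of_mem_edgesOf_of_nodup hP huv hP']
    exact ⟨(mem_edgesOf_iff_infix.1 hwv).subset (by simp), hX⟩
  · exact absurd (mem_edgesOf_iff_infix.1 hQ).subset (by simp [hvQ])

theorem forall_mem_not_switched_of_infix (hP : P.Nodup) (htQ : t ∈ Q) (h : a :: m <:+: P)
    (hm : ∀ x ∈ m, x ∉ Q) (ha : a ∈ p) (hat : a ≠ t) (hX : ¬X a) :
    ∀ v ∈ m, v ∈ p ∧ ¬X v := by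
  induction m generalizing a with
  | nil => simp
  | cons b m ih =>
    have hb : b ∈ p := hp.mem_of_not_switched hP ha hat hX
      (mem_edgesOf_iff_infix.2 (List.IsInfix.trans ⟨[], m, by simp⟩ h))
    have hbt : b ≠ t := fun hbt => hm b (by simp) (hbt ▸ htQ)
    have hXb : ¬X b := hp.not_switched_of_not_mem hb hbt (hm b (by simp))
    rintro v (_ | ⟨_, hv⟩)
    · exact ⟨hb, hXb⟩
    · exact ih ((List.suffix_cons a _).isInfix.trans h) (fun x hx => hm x (by simp [hx])) hb hbt
        hXb v hv

theorem mem_not_switched_of_infix (hP : P.Nodup) (hsQ : s ∈ Q) (h : a :: m <:+: P)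
    (hm : ∀ x ∈ m, x ∉ Q) (hv : v ∈ m) (hvp : v ∈ p) : a ∈ p ∧ ¬X a := by
  induction m generalizing a with
  | nil => simp at hv
  | cons b m ih =>
    have hab : (a, b) ∈ edgesOf P :=
      mem_edgesOf_iff_infix.2 (List.IsInfix.trans ⟨[], m, by simp⟩ h)
    have hb : b ∈ p := by
      rcases List.mem_cons.1 hv with rfl | hv
      · exact hvp
      · exact (ih ((List.suffix_cons a _).isInfix.trans h) (fun x hx => hm x (by simp [hx])) hv).1
    exact hp.mem_not_switched_of_pred hP hb (fun hbs => hm b (by simp) (hbs ▸ hsQ))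
      (hm b (by simp)) hab

theorem mem_of_detour (hP : P.Nodup) (hsQ : s ∈ Q) (hd : Detour P Q a m z) {w : V}
    (hwz : (w, z) ∈ edgesOf P) (hwp : w ∈ p) : a ∈ p := by
  rcases List.mem_cons.1 (mem_of_mem_edgesOf_of_infix hP hd.1 hwz) with rfl | hwm
  · exact hwp
  · exact (hp.mem_not_switched_of_infix hP hsQ ((List.prefix_append _ _).isInfix.trans hd.1)
      hd.2.2.2 hwm hwp).1

end UFN.IsPathIn

end Switching

section PathPair

variable {V : Type} [DecidableEq V] {P Q p m : List V} {X Y : V → Prop} {s t a z u : V}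

structure PathPair (P Q : List V) (s t : V) : Prop where
  nodup_left : P.Nodup
  nodup_right : Q.Nodup
  head_left : P.head? = some s
  head_right : Q.head? = some s
  getLast_left : P.getLast? = some t
  getLast_right : Q.getLast? = some t
  filter_eq : P.filter (· ∈ Q) = Q.filter (· ∈ P)

namespace PathPair

variable (hPQ : PathPair P Q s t)
include hPQ

theorem symm : PathPair Q P s t :=
  ⟨hPQ.2, hPQ.1, hPQ.4, hPQ.3, hPQ.6, hPQ.5, hPQ.7.symm⟩

theorem source_mem_right : s ∈ Q := List.mem_of_mem_head? hPQ.head_right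

theorem target_mem_right : t ∈ Q := List.mem_of_getLast? hPQ.getLast_right

theorem head_filter : (P.filter (· ∈ Q)).head? = some s := by
  obtain ⟨P', rfl⟩ : ∃ P', P = s :: P' := by
    simpa [List.head?_eq_some_iff] using hPQ.head_left
  simp [hPQ.source_mem_right]

theorem getLast_filter : (P.filter (· ∈ Q)).getLast? = some t := by
  obtain ⟨P', rfl⟩ : ∃ P', P = P' ++ [t] := by
    simpa [List.getLast?_eq_some_iff] using hPQ.getLast_left
  simp [hPQ.target_mem_right]

end PathPair

namespace UFN.IsPathIn

variable (hp : UFN.IsPathIn (switchEdge P Q X) s t p)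
include hp

theorem mem_of_mem_of_mem (hPQ : PathPair P Q s t) {c : V} (hcP : c ∈ P) (hcQ : c ∈ Q) :
    c ∈ p := by
  have hstep : (P.filter (· ∈ Q)).IsChain (fun x y => y ∈ p → x ∈ p) := by
    refine isChain_iff_forall_mem_edgesOf.2 fun a z h hz => ?_
    have hzs : z ≠ s := snd_ne_of_mem_edgesOf_of_head (hPQ.nodup_left.filter _) hPQ.head_filter h
    obtain ⟨w, hwz⟩ := exists_mem_edgesOf_of_ne_head hp.1 hz hzs
    have hwp : w ∈ p := (mem_edgesOf_iff_infix.1 hwz).subset (by simp)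
    rcases hp.switchEdge_of_mem_edgesOf hwz with ⟨hP, -⟩ | ⟨hQ, -⟩
    · obtain ⟨m, hd⟩ := exists_detour_of_mem_edgesOf_filter h
      exact hp.mem_of_detour hPQ.nodup_left hPQ.source_mem_right hd hP hwp
    · obtain ⟨m, hd⟩ := exists_detour_of_mem_edgesOf_filter (hPQ.filter_eq ▸ h)
      exact hp.swap.mem_of_detour hPQ.nodup_right hPQ.symm.source_mem_right hd hQ hwp
  refine hstep.backwards_induction (· ∈ p) _ (fun _ _ h => h) (fun hne => ?_) c
    (by simp [hcP, hcQ])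
  rw [(List.getLast_eq_iff_getLast?_eq_some hne).2 hPQ.getLast_filter]
  exact List.mem_of_getLast? hp.2.1

theorem not_switched_of_detour (hPQ : PathPair P Q s t) (hd : Detour P Q a m z) (ha : ¬X a) :
    ∀ v ∈ m, ¬X v := by
  have haP : a ∈ P := hd.1.subset (by simp)
  obtain ⟨b, l, hbl⟩ := List.exists_cons_of_ne_nil (List.concat_ne_nil z m)
  have hat : a ≠ t := fst_ne_of_mem_edgesOf_of_getLast hPQ.nodup_left hPQ.getLast_left
    (y := b) (mem_edgesOf_iff_infix.2 (List.IsInfix.trans ⟨[], l, by simp [hbl]⟩ hd.1))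
  intro v hv
  exact (hp.forall_mem_not_switched_of_infix hPQ.nodup_left hPQ.target_mem_right
    ((List.prefix_append _ _).isInfix.trans hd.1) hd.2.2.2 (hp.mem_of_mem_of_mem hPQ haP hd.2.1)
    hat ha v hv).2

theorem switchConsistent (hPQ : PathPair P Q s t) : SwitchConsistent P Q X :=
  ⟨fun _ _ _ hd => hp.not_switched_of_detour hPQ hd, fun _ _ _ hd ha v hv =>
    not_not.1 (hp.swap.not_switched_of_detour hPQ.symm hd (not_not.2 ha) v hv)⟩

theorem not_switched_of_agree (hPQ : PathPair P Q s t)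
    (hY : ∀ a m z, Detour P Q a m z → ¬Y a → ∀ v ∈ m, ¬Y v)
    (hXY : ∀ c ∈ P, c ∈ Q → (X c ↔ Y c)) (hu : u ∈ p) (huP : u ∈ P) (hX : ¬X u) :
    ¬Y u := by
  by_cases huQ : u ∈ Q
  · exact (hXY u huP huQ).not.1 hX
  obtain ⟨a, m, z, hd, hum⟩ := exists_detour_of_mem hPQ.head_left hPQ.getLast_left
    hPQ.source_mem_right hPQ.target_mem_right huP huQ
  have ha := hp.mem_not_switched_of_infix hPQ.nodup_left hPQ.source_mem_right
    ((List.prefix_append _ _).isInfix.trans hd.1) hd.2.2.2 hum hu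
  exact hY a m z hd ((hXY a (hd.1.subset (by simp)) hd.2.1).not.1 ha.2) u hum

theorem transfer (hPQ : PathPair P Q s t) (hY : SwitchConsistent P Q Y)
    (hXY : ∀ c ∈ P, c ∈ Q → (X c ↔ Y c)) : UFN.IsPathIn (switchEdge P Q Y) s t p := by
  refine ⟨hp.1, hp.2.1, isChain_iff_forall_mem_edgesOf.2 fun u v huv => ?_, hp.2.2.2⟩
  have hu : u ∈ p := (mem_edgesOf_iff_infix.1 huv).subset (by simp)
  rcases hp.switchEdge_of_mem_edgesOf huv with ⟨hP, hX⟩ | ⟨hQ, hX⟩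
  · exact Or.inl ⟨hP, hp.not_switched_of_agree hPQ hY.1 hXY hu
      ((mem_edgesOf_iff_infix.1 hP).subset (by simp)) hX⟩
  · refine Or.inr ⟨hQ, not_not.1 (hp.swap.not_switched_of_agree hPQ.symm
      (fun a m z hd ha v hv => not_not.2 (hY.2 a m z hd (not_not.1 ha) v hv))
      (fun c hcQ hcP => (hXY c hcP hcQ).not) hu ((mem_edgesOf_iff_infix.1 hQ).subset (by simp))
      (not_not.2 hX))⟩

end UFN.IsPathIn

end PathPair

namespace UFN

variable {V : Type} {k : ℕ} {G : UFN V k}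

theorem active_eq (U : Set (V × Fin k)) (i : Fin k) :
    G.active U i = switchEdge (G.old i) (G.new i) (fun v => (v, i) ∈ U) := rfl

variable [DecidableEq V]

theorem WellFormed.pathPair (hWF : G.WellFormed) (i : Fin k) :
    PathPair (G.old i) (G.new i) G.s G.t := by
  obtain ⟨⟨hO₁, hO₂, hO₃⟩, hN₁, hN₂, hN₃⟩ := hWF.1 i
  refine ⟨hO₃, hN₃, hO₁, hN₁, hO₂, hN₂, ?_⟩
  obtain ⟨ord, hord⟩ := hWF.2.1 i
  have hsorted : ∀ L : List V, (∀ e ∈ edgesOf L, ord e.1 < ord e.2) →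
      L.Pairwise (fun x y => ord x < ord y) := fun L hL =>
    List.pairwise_map.1 (List.isChain_iff_pairwise.1
      ((List.isChain_map ord).2 (isChain_iff_forall_mem_edgesOf.2 fun x y h => hL (x, y) h)))
  refine List.Perm.eq_of_pairwise (le := fun x y => ord x < ord y)
    (fun _ _ _ _ h h' => absurd h' (lt_asymm h))
    ((hsorted _ fun e he => hord e (List.mem_append_left _ he)).filter _)
    ((hsorted _ fun e he => hord e (List.mem_append_right _ he)).filter _)
    ((List.perm_ext_iff_of_nodup (hO₃.filter _) (hN₃.filter _)).2 fun x => ?_)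
  simp only [List.mem_filter, decide_eq_true_eq]
  exact and_comm

theorem TransientFamily.of_agree (hWF : G.WellFormed) {U U' : Set (V × Fin k)}
    (h : G.TransientFamily U)
    (hU' : ∀ i, SwitchConsistent (G.old i) (G.new i) (fun v => (v, i) ∈ U'))
    (hUU' : ∀ i, ∀ c ∈ G.old i, c ∈ G.new i → ((c, i) ∈ U ↔ (c, i) ∈ U')) :
    G.TransientFamily U' := by
  obtain ⟨T, hT, hcap⟩ := h
  refine ⟨T, fun i => ?_, hcap⟩
  obtain ⟨hp, hval, huniq⟩ := hT i
  have hPQ := hWF.pathPair i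
  rw [active_eq] at hp huniq
  refine ⟨hp.transfer hPQ (hU' i) (hUU' i), hval, fun q hq hqval => huniq q ?_ hqval⟩
  rw [active_eq] at hq
  exact hq.transfer hPQ (hp.switchConsistent hPQ) fun c hcP hcQ => (hUU' i c hcP hcQ).symm

/-- The last branch also catches vertices on neither path, whose round does not matter. -/
def blockSchedule (G : UFN V k) (R : V × Fin k → ℕ) (u : V × Fin k) : ℕ :=
  if u.1 ∈ G.new u.2 then
    if u.1 ∈ G.old u.2 then 3 * R u + 2
    else 3 * R (detourStart (G.new u.2) (G.old u.2) u.1, u.2) + 1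
  else 3 * R (detourStart (G.old u.2) (G.new u.2) u.1, u.2) + 3

variable {R : V × Fin k → ℕ} {i : Fin k} {a z v : V} {m : List V}

theorem blockSchedule_of_mem_of_mem (hO : v ∈ G.old i) (hN : v ∈ G.new i) :
    blockSchedule G R (v, i) = 3 * R (v, i) + 2 := by
  simp [blockSchedule, hO, hN]

theorem blockSchedule_of_detour_new (hN : (G.new i).Nodup) (hd : Detour (G.new i) (G.old i) a m z)
    (hv : v ∈ m) : blockSchedule G R (v, i) = 3 * R (a, i) + 1 := by
  have hvN : v ∈ G.new i := hd.1.subset (by simp [hv])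
  simp [blockSchedule, hvN, hd.2.2.2 v hv,
    detourStart_eq hN ((List.prefix_append _ _).isInfix.trans hd.1) hd.2.1 hd.2.2.2 hv]

theorem blockSchedule_of_detour_old (hO : (G.old i).Nodup) (hd : Detour (G.old i) (G.new i) a m z)
    (hv : v ∈ m) : blockSchedule G R (v, i) = 3 * R (a, i) + 3 := by
  simp [blockSchedule, hd.2.2.2 v hv,
    detourStart_eq hO ((List.prefix_append _ _).isInfix.trans hd.1) hd.2.1 hd.2.2.2 hv]

theorem switchConsistent_blockSchedule {r : ℕ} {S : Set (V × Fin k)}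
    (hS : ∀ u ∈ S, blockSchedule G R u = r) (hO : (G.old i).Nodup) (hN : (G.new i).Nodup) :
    SwitchConsistent (G.old i) (G.new i)
      (fun v => (v, i) ∈ {u | blockSchedule G R u < r} ∪ S) := by
  constructor
  · intro a m z hd ha v hv hvU
    have hR := blockSchedule_of_mem_of_mem (R := R) (hd.1.subset (by simp)) hd.2.1
    have hRv := blockSchedule_of_detour_old (R := R) hO hd hv
    have hSv := hS (v, i)
    have hSa := hS (a, i)
    simp only [Set.mem_union, Set.mem_ofPred_eq] at ha hvU
    grind
  · intro a m z hd ha v hv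
    have hR := blockSchedule_of_mem_of_mem (R := R) hd.2.1 (hd.1.subset (by simp))
    have hRv := blockSchedule_of_detour_new (R := R) hN hd hv
    have hSa := hS (a, i)
    simp only [Set.mem_union, Set.mem_ofPred_eq] at ha ⊢
    grind

theorem Feasible.blockSchedule (hWF : G.WellFormed) (hR : G.Feasible R) :
    G.Feasible (G.blockSchedule R) := by
  intro r S hS
  refine (hR (r / 3) {u | u ∈ S ∧ R u = r / 3} fun u hu => hu.2).of_agree hWF
    (fun i => switchConsistent_blockSchedule hS (hWF.pathPair i).nodup_left
      (hWF.pathPair i).nodup_right) fun i c hcO hcN => ?_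
  have hc := blockSchedule_of_mem_of_mem (R := R) hcO hcN
  have hSc := hS (c, i)
  simp only [Set.mem_union, Set.mem_ofPred_eq]
  grind

theorem blockPattern_blockSchedule (hWF : G.WellFormed) (R : V × Fin k → ℕ) :
    G.BlockPattern (G.blockSchedule R) := by
  rintro ⟨i, a, z⟩ hb
  have hPQ := hWF.pathPair i
  obtain ⟨m, hd⟩ := exists_detour_of_mem_edgesOf_filter (P := G.old i) (Q := G.new i) hb
  have hb' : (a, z) ∈ edgesOf ((G.old i).filter (· ∈ G.new i)) := hb
  obtain ⟨m', hd'⟩ := exists_detour_of_mem_edgesOf_filter (hPQ.filter_eq ▸ hb')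
  refine ⟨3 * R (a, i) + 1, fun v hv hva hvz => ?_, ?_, fun v hv hvN => ?_⟩
  · rw [blkNewSeg, segment_eq_of_infix hPQ.nodup_right hd'.1] at hv
    have hvm : v ∈ m' := by simp_all
    exact blockSchedule_of_detour_new hPQ.nodup_right hd' hvm
  · exact blockSchedule_of_mem_of_mem (hd.1.subset (by simp)) hd.2.1
  · rw [blkOldSeg, segment_eq_of_infix hPQ.nodup_left hd.1] at hv
    have hvm : v ∈ m := by
      simp only [List.cons_append, List.mem_cons, List.mem_append, List.not_mem_nil, or_false] at hv
      rcases hv with rfl | hv | rfl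
      · exact absurd hd.2.1 hvN
      · exact hv
      · exact absurd hd.2.2.1 hvN
    exact blockSchedule_of_detour_old hPQ.nodup_left hd hvm

end UFN

end FlowUpdate

open FlowUpdate in
/-- If there exists any feasible update sequence, then there exists
a feasible update sequence in which every block is updated in at most 3
consecutive rounds: first all update-path vertices of the block except its
start, then the start vertex, then all remaining (old-path-only) vertices. -/
theorem stmt2 {V : Type} [DecidableEq V] {k : ℕ} (G : UFN V k)
    (hWF : G.WellFormed) (hfeas : ∃ R : V × Fin k → ℕ, G.Feasible R) :
    ∃ R' : V × Fin k → ℕ, G.Feasible R' ∧ G.BlockPattern R' := by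
  obtain ⟨R, hR⟩ := hfeas
  exact ⟨G.blockSchedule R, hR.blockSchedule hWF, UFN.blockPattern_blockSchedule hWF R⟩
end
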